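/- arXiv:2202.03459 — 5 statements merged into one kernel-verified Lean document; each statement's English description precedes it below -/
import Mathlib

section
/- Consider the line swap strategy on a path with n ≥ 2 vertices labeled 0,…,n−1, which alternately applies swap layers to all even-numbered edges and all odd-numbered edges, starting with the even edges (edge (i,i+1) is even if i is even). Then for every k with 0 ≤ k ≤ n, the position of the qubit that started at vertex i after k swap layers equals min(i+k, 2n−i−1−k) if i is even, and max(i−k, k−i−1) if i is odd. -/
/-- The swap layer on all even-numbered edges `(i, i+1)` (with `i` even) of a path with
`n` vertices, viewed as the map it induces on positions. -/
def evenSwap (n j : ℕ) : ℕ :=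
  if j % 2 = 0 then (if j + 1 < n then j + 1 else j) else j - 1

/-- The swap layer on all odd-numbered edges `(i, i+1)` (with `i` odd) of a path with
`n` vertices, viewed as the map it induces on positions. -/
def oddSwap (n j : ℕ) : ℕ :=
  if j % 2 = 1 then (if j + 1 < n then j + 1 else j) else (if j = 0 then j else j - 1)

/-- `linePos n k i` is the position, after `k` swap layers of the alternating line swap
strategy (starting with the even-edge layer), of the token that started at vertex `i`. -/
def linePos (n : ℕ) : ℕ → ℕ → ℕ
  | 0, i => i
  | k + 1, i => (if k % 2 = 0 then evenSwap n else oddSwap n) (linePos n k i)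

/-- position formula for the alternating even/odd line swap strategy. -/
theorem line_swap_position (n : ℕ) (hn : 2 ≤ n) (k i : ℕ) (hk : k ≤ n) (hi : i < n) :
    linePos n k i =
      if i % 2 = 0 then min (i + k) (2 * n - i - 1 - k) else max (i - k) (k - i - 1) := by
  induction k with
  | zero => simp only [linePos]; split_ifs <;> omega
  | succ k ih =>
    have H := ih (by omega)
    simp only [linePos, H]
    by_cases hk2 : k % 2 = 0
    · simp only [if_pos hk2, evenSwap]; split_ifs <;> omega
    · simp only [if_neg hk2, oddSwap]; split_ifs <;> omega
end

section
/- Under the alternating even/odd line swap strategy on a path with n vertices (starting with the even-edge layer), after exactly n swap layers the token initially at vertex i occupies vertex n−1−i, i.e., the line is fully reversed. -/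
lemma linePos_formula (n : ℕ) : ∀ k, k ≤ n → ∀ i, i < n →
    linePos n k i =
      if i % 2 = 0 then min (i + k) (2 * n - 1 - i - k) else max (i - k) (k - i - 1) := by
  intro k
  induction k with
  | zero =>
    intro _ i hi
    simp only [linePos]
    split_ifs <;> omega
  | succ k ih =>
    intro hk i hi
    have h := ih (by omega) i hi
    simp only [linePos, h]
    by_cases hk2 : k % 2 = 0
    · simp only [if_pos hk2, evenSwap]
      split_ifs <;> omega
    · simp only [if_neg hk2, oddSwap]
      split_ifs <;> omega

/-- after exactly `n` swap layers of the alternating even/odd line swap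
strategy, the token initially at vertex `i` occupies vertex `n - 1 - i`: the line is
fully reversed. -/
theorem line_swap_full_reversal (n : ℕ) (i : ℕ) (hi : i < n) :
    linePos n n i = n - 1 - i := by
  rw [linePos_formula n n le_rfl i hi]
  split_ifs <;> omega
end

section
/- Under the alternating even/odd line swap strategy on a path with n ≥ 2 vertices (starting with the even-edge layer), after exactly n−2 swap layers, every pair of distinct tokens has been adjacent (occupied endpoints of a common edge of the path) at some time step between 0 and n−2. In other words, the strategy reaches full connectivity after n−2 swap layers. -/
/-- Closed form for `linePos` for small times: even-start tokens move right and bounce at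
`n-1`; odd-start tokens move left and bounce at `0`. -/
def fpos (n t i : ℕ) : ℕ :=
  if i % 2 = 0 then (if i + t + 1 ≤ n then i + t else 2 * n - 1 - i - t)
  else (if t ≤ i then i - t else t - i - 1)

lemma linePos_eq (n : ℕ) (hn : 2 ≤ n) :
    ∀ t, t ≤ n - 2 → ∀ i, i < n → linePos n t i = fpos n t i := by
  intro t
  induction t with
  | zero =>
    intro _ i hi
    simp only [linePos, fpos]
    split_ifs <;> omega
  | succ t ih =>
    intro ht i hi
    have h1 := ih (by omega) i hi
    by_cases hp : t % 2 = 0 <;>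
      simp only [linePos, h1, hp, if_true, if_false, evenSwap, oddSwap, fpos,
        reduceIte] <;>
      split_ifs <;> omega

/-- the alternating even/odd line swap strategy on a path with `n ≥ 2`
vertices reaches full connectivity after `n - 2` swap layers: every pair of distinct
tokens occupies adjacent vertices at some time step `t ≤ n - 2`. -/
theorem line_swap_full_connectivity (n : ℕ) (hn : 2 ≤ n) :
    ∀ i < n, ∀ j < n, i ≠ j →
      ∃ t ≤ n - 2, linePos n t i + 1 = linePos n t j ∨ linePos n t j + 1 = linePos n t i := by
  suffices H : ∀ a b, a < n → b < n → a < b →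
      ∃ t ≤ n - 2, linePos n t a + 1 = linePos n t b ∨ linePos n t b + 1 = linePos n t a by
    intro i hi j hj hij
    rcases lt_or_gt_of_ne hij with h | h
    · exact H i j hi hj h
    · obtain ⟨t, ht, h'⟩ := H j i hj hi h
      exact ⟨t, ht, h'.symm⟩
  intro a b ha hb hab
  by_cases hb1 : b = a + 1
  · refine ⟨0, by omega, ?_⟩
    simp only [linePos]
    omega
  -- now b ≥ a + 2
  have hab2 : a + 2 ≤ b := by omega
  by_cases hae : a % 2 = 0 <;> by_cases hbe : b % 2 = 0
  · -- both even: they meet after b bounces at the right end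
    refine ⟨n - 1 - (a + b) / 2, by omega, ?_⟩
    rw [linePos_eq n hn _ (by omega) a ha, linePos_eq n hn _ (by omega) b hb]
    simp only [fpos]
    split_ifs <;> omega
  · -- a even (moves right), b odd (moves left): they meet in the middle
    refine ⟨(b - a) / 2, by omega, ?_⟩
    rw [linePos_eq n hn _ (by omega) a ha, linePos_eq n hn _ (by omega) b hb]
    simp only [fpos]
    split_ifs <;> omega
  · -- a odd (moves left, bounces at 0), b even (moves right, bounces at n-1)
    refine ⟨n - 1 - (b - a) / 2, by omega, ?_⟩
    rw [linePos_eq n hn _ (by omega) a ha, linePos_eq n hn _ (by omega) b hb]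
    simp only [fpos]
    split_ifs <;> omega
  · -- both odd: a bounces at 0 and meets b
    refine ⟨(a + b) / 2, by omega, ?_⟩
    rw [linePos_eq n hn _ (by omega) a ha, linePos_eq n hn _ (by omega) b hb]
    simp only [fpos]
    split_ifs <;> omega
end

section
/- For all positive integers i, j with i = j and n = 5ij + 4(i+j) − 1, the longest-path length l_max = 4(ij + i + j) + 1 of the i×j heavy-hex graph satisfies l_max ≤ (4/5)n + (4/5)√n + 1. -/
/-- for the square heavy-hex lattice (`i = j`) with
`n = 5ij + 4(i+j) − 1` qubits, the longest-path length `l_max = 4(ij+i+j) + 1`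
satisfies `l_max ≤ (4/5)n + (4/5)√n + 1`. -/
theorem heavy_hex_longest_line_bound (i j n : ℕ) (hi : 1 ≤ i) (hij : i = j)
    (hn : n = 5 * i * j + 4 * (i + j) - 1) :
    (4 * (i * j + i + j) + 1 : ℝ) ≤
      4 / 5 * (n : ℝ) + 4 / 5 * Real.sqrt n + 1 := by
  subst hij
  have hn' : n + 1 = 5 * i * i + 8 * i := by omega
  have hnr : (n : ℝ) + 1 = 5 * i * i + 8 * i := by exact_mod_cast congrArg (Nat.cast : ℕ → ℝ) hn'
  have hs : (2 * (i : ℝ) + 1) ≤ Real.sqrt n := by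
    rw [show (2 * (i : ℝ) + 1) = Real.sqrt ((2 * i + 1) ^ 2) by
      rw [Real.sqrt_sq (by positivity)]]
    apply Real.sqrt_le_sqrt
    have hi' : (1 : ℝ) ≤ i := by exact_mod_cast hi
    nlinarith [sq_nonneg ((i:ℝ) - 1)]
  nlinarith [hs, hnr]
end

section
/- Consider two parallel paths each with n vertices (a 2×n grid), tokens initially at their own positions, where the alternating even/odd line swap strategy is applied simultaneously to both rows but with opposite parity (when one row swaps even edges the other swaps odd edges). Then after n swap layers both rows are fully reversed, and consequently every token in the top row has been vertically adjacent (same column) to every token in the bottom row at some time step 0 ≤ t ≤ n. -/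
/-- `linePosO n k i` is the position after `k` layers of the alternating line swap
strategy that starts with the odd-edge layer (the second row of the 2×n grid). -/
def linePosO (n : ℕ) : ℕ → ℕ → ℕ
  | 0, i => i
  | k + 1, i => (if k % 2 = 0 then oddSwap n else evenSwap n) (linePosO n k i)

def posE (n t i : ℕ) : ℕ :=
  if i % 2 = 0 then (if t ≤ n - 1 - i then i + t else 2 * n - 1 - i - t)
  else (if t ≤ i then i - t else t - i - 1)

def posO (n t i : ℕ) : ℕ :=
  if i % 2 = 1 then (if t ≤ n - 1 - i then i + t else 2 * n - 1 - i - t)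
  else (if t ≤ i then i - t else t - i - 1)

lemma stepE (n t i : ℕ) (ht : t < n) (hi : i < n) :
    (if t % 2 = 0 then evenSwap n else oddSwap n) (posE n t i) = posE n (t + 1) i := by
  by_cases h : t % 2 = 0 <;>
    simp only [h, if_pos, if_neg, reduceCtorEq, ite_true, ite_false] <;>
    simp only [evenSwap, oddSwap, posE] <;> split_ifs <;> omega

lemma stepO (n t i : ℕ) (ht : t < n) (hi : i < n) :
    (if t % 2 = 0 then oddSwap n else evenSwap n) (posO n t i) = posO n (t + 1) i := by
  by_cases h : t % 2 = 0 <;>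
    simp only [h, if_pos, if_neg, reduceCtorEq, ite_true, ite_false] <;>
    simp only [evenSwap, oddSwap, posO] <;> split_ifs <;> omega

lemma line_closed (n : ℕ) (i : ℕ) (hi : i < n) :
    ∀ t, t ≤ n → linePos n t i = posE n t i ∧ linePosO n t i = posO n t i := by
  intro t
  induction t with
  | zero =>
    intro _
    constructor
    · show i = posE n 0 i
      simp only [posE]; split_ifs <;> omega
    · show i = posO n 0 i
      simp only [posO]; split_ifs <;> omega
  | succ t ih =>
    intro ht
    obtain ⟨h1, h2⟩ := ih (by omega)
    constructor
    · show (if t % 2 = 0 then evenSwap n else oddSwap n) (linePos n t i) = _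
      rw [h1, stepE n t i (by omega) hi]
    · show (if t % 2 = 0 then oddSwap n else evenSwap n) (linePosO n t i) = _
      rw [h2, stepO n t i (by omega) hi]

/-- on a 2×n grid where the alternating line swap strategy is applied to
both rows with opposite parity (row 0 starting with even edges, row 1 with odd edges),
after `n` layers both rows are fully reversed, and every token of the top row has been
vertically adjacent (same column) to every token of the bottom row at some time `t ≤ n`. -/
theorem double_line_full_connectivity (n : ℕ) (hn : 1 ≤ n) :
    (∀ i < n, linePos n n i = n - 1 - i ∧ linePosO n n i = n - 1 - i) ∧
    (∀ i < n, ∀ j < n, ∃ t ≤ n, linePos n t i = linePosO n t j) := by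

  constructor
  · intro i hi
    obtain ⟨h1, h2⟩ := line_closed n i hi n le_rfl
    rw [h1, h2]
    constructor <;> [skip; skip] <;>
      first
        | (show posE n n i = n - 1 - i; simp only [posE]; split_ifs <;> omega)
        | (show posO n n i = n - 1 - i; simp only [posO]; split_ifs <;> omega)
  · intro i hi j hj
    -- choose an explicit meeting time depending on parities and order
    have key : ∀ t ≤ n, linePos n t i = posE n t i := fun t ht => (line_closed n i hi t ht).1
    have keyO : ∀ t ≤ n, linePosO n t j = posO n t j := fun t ht => (line_closed n j hj t ht).2
    have meet : ∀ t ≤ n, posE n t i = posO n t j → ∃ t ≤ n, linePos n t i = linePosO n t j :=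
      fun t ht h => ⟨t, ht, by rw [key t ht, keyO t ht, h]⟩
    by_cases hi2 : i % 2 = 0 <;> by_cases hj2 : j % 2 = 0
    · -- both even: meet at (j-i)/2 if j ≥ i, else at n - (i-j)/2
      rcases le_or_gt i j with hle | hlt
      · exact meet ((j - i) / 2) (by omega)
          (by simp only [posE, posO]; split_ifs <;> omega)
      · exact meet (n - (i - j) / 2) (by omega)
          (by simp only [posE, posO]; split_ifs <;> omega)
    · -- i even, j odd: meet at n - (i+j+1)/2
      exact meet (n - (i + j + 1) / 2) (by omega)
        (by simp only [posE, posO]; split_ifs <;> omega)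
    · -- i odd, j even: meet at (i+j+1)/2
      exact meet ((i + j + 1) / 2) (by omega)
        (by simp only [posE, posO]; split_ifs <;> omega)
    · -- both odd: meet at (i-j)/2 if i ≥ j, else at n - (j-i)/2
      rcases le_or_gt j i with hle | hlt
      · exact meet ((i - j) / 2) (by omega)
          (by simp only [posE, posO]; split_ifs <;> omega)
      · exact meet (n - (j - i) / 2) (by omega)
          (by simp only [posE, posO]; split_ifs <;> omega)
end
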